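/- Let $f : \mathbb{R} \times \mathbb{R}^d \to \mathbb{R}^d$ satisfy $\|f(t,x) - f(t,y)\| \leq C_1 (1 + \|x\|^{\gamma-1} + \|y\|^{\gamma-1}) \|x - y\|$ for all $x, y \in \mathbb{R}^d$, where $\gamma \geq 1$. Let $\Phi(x) = \min\{1, h^{-1/(2\gamma)}\|x\|^{-1}\} x$ (with $\Phi(0)=0$) for $h \in (0,1)$. Then $\|f(t,\Phi(x)) - f(t,\Phi(y))\| \leq 3 C_1 h^{-(\gamma-1)/(2\gamma)} \|x - y\|$ for all $x, y \in \mathbb{R}^d$. -/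

import Mathlib

/-!
The map `Φ` is the radial retraction onto the closed ball of radius `R = h ^ (-1 / (2γ))`; it is
`1`-Lipschitz, being the metric projection onto a convex set of a Hilbert space. On that ball the
local Lipschitz constant `C₁ (1 + ‖x‖ ^ (γ - 1) + ‖y‖ ^ (γ - 1))` of `f` is at most
`3 C₁ R ^ (γ - 1)` because `R ≥ 1`, and `R ^ (γ - 1) = h ^ (-(γ - 1) / (2γ))`.
-/

open RealInnerProductSpace

noncomputable def radialRetraction {E : Type*} [NormedAddCommGroup E] [NormedSpace ℝ E]
    (R : ℝ) (x : E) : E :=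
  min 1 (R * ‖x‖⁻¹) • x

section Normed

variable {E : Type*} [NormedAddCommGroup E] [NormedSpace ℝ E] {R : ℝ} {x : E}

theorem radialRetraction_of_norm_le (hx : ‖x‖ ≤ R) : radialRetraction R x = x := by
  rcases eq_or_ne x 0 with rfl | hx0
  · simp [radialRetraction]
  have hRx : 1 ≤ R * ‖x‖⁻¹ := by
    rw [← div_eq_mul_inv]
    exact (one_le_div (norm_pos_iff.mpr hx0)).mpr hx
  simp [radialRetraction, min_eq_left hRx]

theorem radialRetraction_of_le_norm (hx : R ≤ ‖x‖) :
    radialRetraction R x = (R * ‖x‖⁻¹) • x := by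
  rw [radialRetraction, min_eq_right, ← div_eq_mul_inv]
  exact div_le_one_of_le₀ hx (norm_nonneg x)

theorem norm_radialRetraction_le (hR : 0 ≤ R) (x : E) : ‖radialRetraction R x‖ ≤ R := by
  rcases le_or_gt ‖x‖ R with hx | hx
  · rwa [radialRetraction_of_norm_le hx]
  · rw [radialRetraction_of_le_norm hx.le, norm_smul, Real.norm_of_nonneg (by positivity),
      mul_assoc, inv_mul_cancel₀ (hR.trans_lt hx).ne', mul_one]

end Normed

section InnerProduct

variable {E : Type*} [NormedAddCommGroup E] [InnerProductSpace ℝ E]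

/-- The variational inequality characterising projections onto convex sets forces them to be
nonexpansive. -/
theorem norm_sub_le_of_inner_nonpos {x y a b : E} (ha : ⟪x - a, b - a⟫ ≤ 0)
    (hb : ⟪y - b, a - b⟫ ≤ 0) : ‖a - b‖ ≤ ‖x - y‖ := by
  have hsq : ‖a - b‖ ^ 2 ≤ ⟪x - y, a - b⟫ := by
    have hsplit : ⟪x - y, a - b⟫ = ‖a - b‖ ^ 2 - ⟪x - a, b - a⟫ - ⟪y - b, a - b⟫ := by
      rw [← real_inner_self_eq_norm_sq]
      simp only [inner_sub_left, inner_sub_right, real_inner_comm]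
      ring
    linarith
  have hcs : ⟪x - y, a - b⟫ ≤ ‖x - y‖ * ‖a - b‖ := real_inner_le_norm _ _
  nlinarith [norm_nonneg (a - b), norm_nonneg (x - y)]

theorem inner_sub_radialRetraction_nonpos {R : ℝ} (x : E) {w : E} (hw : ‖w‖ ≤ R) :
    ⟪x - radialRetraction R x, w - radialRetraction R x⟫ ≤ 0 := by
  rcases le_or_gt ‖x‖ R with hx | hx
  · simp [radialRetraction_of_norm_le hx]
  have hx0 : 0 < ‖x‖ := (norm_nonneg w).trans_lt (hw.trans_lt hx)
  have hc : R * ‖x‖⁻¹ ≤ 1 := by rw [← div_eq_mul_inv]; exact div_le_one_of_le₀ hx.le hx0.le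
  have hinner : ⟪x, w - (R * ‖x‖⁻¹) • x⟫ ≤ 0 := by
    have hcx : R * ‖x‖⁻¹ * ‖x‖ ^ 2 = R * ‖x‖ := by field_simp
    rw [inner_sub_right, real_inner_smul_right, real_inner_self_eq_norm_sq, hcx]
    nlinarith [real_inner_le_norm x w]
  calc ⟪x - radialRetraction R x, w - radialRetraction R x⟫
      = (1 - R * ‖x‖⁻¹) * ⟪x, w - (R * ‖x‖⁻¹) • x⟫ := by
        rw [radialRetraction_of_le_norm hx.le, ← real_inner_smul_left, sub_smul, one_smul]
    _ ≤ 0 := mul_nonpos_of_nonneg_of_nonpos (sub_nonneg.mpr hc) hinner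

theorem norm_radialRetraction_sub_le {R : ℝ} (hR : 0 ≤ R) (x y : E) :
    ‖radialRetraction R x - radialRetraction R y‖ ≤ ‖x - y‖ :=
  norm_sub_le_of_inner_nonpos (inner_sub_radialRetraction_nonpos x (norm_radialRetraction_le hR y))
    (inner_sub_radialRetraction_nonpos y (norm_radialRetraction_le hR x))

end InnerProduct
theorem norm_sub_le_of_polynomialLipschitz_of_norm_le {E F : Type*} [SeminormedAddCommGroup E]
    [SeminormedAddCommGroup F] {f : E → F} {C γ R : ℝ} (hC : 0 ≤ C) (hγ : 1 ≤ γ) (hR : 1 ≤ R)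
    (hf : ∀ x y, ‖f x - f y‖ ≤ C * (1 + ‖x‖ ^ (γ - 1) + ‖y‖ ^ (γ - 1)) * ‖x - y‖)
    {x y : E} (hx : ‖x‖ ≤ R) (hy : ‖y‖ ≤ R) :
    ‖f x - f y‖ ≤ 3 * C * R ^ (γ - 1) * ‖x - y‖ := by
  have hpow : ∀ z : E, ‖z‖ ≤ R → ‖z‖ ^ (γ - 1) ≤ R ^ (γ - 1) := fun z hz =>
    Real.rpow_le_rpow (norm_nonneg z) hz (sub_nonneg.mpr hγ)
  have hone : 1 ≤ R ^ (γ - 1) := Real.one_le_rpow hR (sub_nonneg.mpr hγ)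
  calc ‖f x - f y‖ ≤ C * (1 + ‖x‖ ^ (γ - 1) + ‖y‖ ^ (γ - 1)) * ‖x - y‖ := hf x y
    _ ≤ C * (3 * R ^ (γ - 1)) * ‖x - y‖ := by
        gcongr
        linarith [hpow x hx, hpow y hy]
    _ = 3 * C * R ^ (γ - 1) * ‖x - y‖ := by ring

theorem f_comp_projection_lipschitz
    (d : ℕ) (h γ C₁ : ℝ) (hh : h ∈ Set.Ioo (0 : ℝ) 1) (hγ : 1 ≤ γ) (hC₁ : 0 < C₁)
    (f : ℝ → EuclideanSpace ℝ (Fin d) → EuclideanSpace ℝ (Fin d))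
    (hf : ∀ t x y, ‖f t x - f t y‖ ≤ C₁ * (1 + ‖x‖ ^ (γ - 1) + ‖y‖ ^ (γ - 1)) * ‖x - y‖)
    (Φ : EuclideanSpace ℝ (Fin d) → EuclideanSpace ℝ (Fin d))
    (hΦ : ∀ x, x ≠ 0 → Φ x = (min 1 (h ^ (-(1 / (2 * γ))) * ‖x‖⁻¹)) • x)
    (hΦ0 : Φ 0 = 0) :
    ∀ t x y, ‖f t (Φ x) - f t (Φ y)‖ ≤ 3 * C₁ * h ^ (-((γ - 1) / (2 * γ))) * ‖x - y‖ := by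
  obtain ⟨hh0, hh1⟩ := hh
  set R := h ^ (-(1 / (2 * γ)))
  have hΦR : ∀ x, Φ x = radialRetraction R x := fun x => by
    rcases eq_or_ne x 0 with rfl | hx
    · simp [hΦ0, radialRetraction]
    · exact hΦ x hx
  have hR : 1 ≤ R := Real.one_le_rpow_of_pos_of_le_one_of_nonpos hh0 hh1.le
    (neg_nonpos.mpr (by positivity))
  have hRpow : R ^ (γ - 1) = h ^ (-((γ - 1) / (2 * γ))) := by
    rw [← Real.rpow_mul hh0.le]
    ring_nf
  intro t x y
  rw [← hRpow, hΦR, hΦR]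
  calc _ ≤ 3 * C₁ * R ^ (γ - 1) * ‖radialRetraction R x - radialRetraction R y‖ :=
        norm_sub_le_of_polynomialLipschitz_of_norm_le hC₁.le hγ hR (hf t)
          (norm_radialRetraction_le (by linarith) x) (norm_radialRetraction_le (by linarith) y)
    _ ≤ 3 * C₁ * R ^ (γ - 1) * ‖x - y‖ := by
        gcongr
        exact norm_radialRetraction_sub_le (by linarith) x y
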